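/- arXiv:0801.0155 — 3 statements merged into one kernel-verified Lean document; each statement's English description precedes it below -/
import Mathlib

section
/- For any n×n Hermitian matrices A and B, the Lévy distance between their empirical spectral measures μ_A = (1/n)∑δ_{λ_i(A)} and μ_B = (1/n)∑δ_{λ_i(B)} satisfies L(μ_A, μ_B) ≤ rank(A − B)/n. -/
open Matrix Finset
open scoped Classical

/-! If `v` lies in the span of the eigenvectors of `A` with eigenvalue `≤ x`, in the span of
those of `B` with eigenvalue `> x`, and in `ker (A - B)`, then
`x ‖v‖² ≥ re ⟪A v, v⟫ = re ⟪B v, v⟫ > x ‖v‖²` unless `v = 0`. So these three subspaces meet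
trivially, and counting dimensions gives `N_A(x) ≤ N_B(x) + rank (A - B)` for the eigenvalue
counting functions. The distribution functions therefore differ by at most `rank (A - B) / n`
everywhere, which bounds their Lévy distance. -/

namespace OrthonormalBasis

variable {𝕜 E ι : Type*} [RCLike 𝕜] [NormedAddCommGroup E] [InnerProductSpace 𝕜 E] [Fintype ι]
  (b : OrthonormalBasis ι 𝕜 E)

theorem repr_eq_zero_of_mem_span_image {s : Set ι} {v : E} (hv : v ∈ Submodule.span 𝕜 (b '' s))
    {i : ι} (hi : i ∉ s) : b.repr v i = 0 := by
  rw [← b.coe_toBasis, Module.Basis.mem_span_image] at hv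
  rw [← b.coe_toBasis_repr_apply]
  exact Finsupp.notMem_support_iff.1 fun h => hi (hv h)

theorem finrank_span_image (s : Finset ι) :
    Module.finrank 𝕜 (Submodule.span 𝕜 (b '' s)) = #s := by
  rw [Set.image_eq_range]
  exact (finrank_span_eq_card (b.orthonormal.linearIndependent.comp _ Subtype.val_injective)).trans
    (by simp)

variable {b} {T : E →ₗ[𝕜] E} {μ : ι → ℝ}

theorem repr_apply_eq_mul (hT : T.IsSymmetric) (hb : ∀ i, T (b i) = (μ i : 𝕜) • b i)
    (v : E) (i : ι) : b.repr (T v) i = μ i * b.repr v i := by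
  rw [b.repr_apply_apply, b.repr_apply_apply, ← hT, hb, inner_smul_left, RCLike.conj_ofReal]

theorem re_inner_apply_self_sub_eq_sum (hT : T.IsSymmetric) (hb : ∀ i, T (b i) = (μ i : 𝕜) • b i)
    (x : ℝ) (v : E) :
    RCLike.re (inner 𝕜 (T v) v) - x * ‖v‖ ^ 2 = ∑ i, (μ i - x) * ‖b.repr v i‖ ^ 2 := by
  have hquad : inner 𝕜 (T v) v = ((∑ i, μ i * ‖b.repr v i‖ ^ 2 : ℝ) : 𝕜) := by
    rw [← b.repr.inner_map_map, PiLp.inner_apply, RCLike.ofReal_sum]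
    refine Finset.sum_congr rfl fun i _ => ?_
    rw [repr_apply_eq_mul hT hb, RCLike.inner_apply, map_mul, RCLike.conj_ofReal, mul_left_comm,
      RCLike.mul_conj]
    push_cast
    ring
  rw [hquad, RCLike.ofReal_re, ← b.repr.norm_map, EuclideanSpace.norm_sq_eq, mul_sum,
    ← sum_sub_distrib]
  simp only [sub_mul]

theorem re_inner_apply_self_le_of_mem_span (hT : T.IsSymmetric)
    (hb : ∀ i, T (b i) = (μ i : 𝕜) • b i) {x : ℝ} {v : E}
    (hv : v ∈ Submodule.span 𝕜 (b '' {i | μ i ≤ x})) :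
    RCLike.re (inner 𝕜 (T v) v) ≤ x * ‖v‖ ^ 2 := by
  rw [← sub_nonpos, re_inner_apply_self_sub_eq_sum hT hb]
  refine sum_nonpos fun i _ => ?_
  by_cases hi : μ i ≤ x
  · exact mul_nonpos_of_nonpos_of_nonneg (sub_nonpos.2 hi) (by positivity)
  · simp [b.repr_eq_zero_of_mem_span_image hv hi]

theorem lt_re_inner_apply_self_of_mem_span (hT : T.IsSymmetric)
    (hb : ∀ i, T (b i) = (μ i : 𝕜) • b i) {x : ℝ} {v : E}
    (hv : v ∈ Submodule.span 𝕜 (b '' {i | x < μ i})) (hv0 : v ≠ 0) :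
    x * ‖v‖ ^ 2 < RCLike.re (inner 𝕜 (T v) v) := by
  rw [← sub_pos, re_inner_apply_self_sub_eq_sum hT hb]
  have hterm : ∀ i, b.repr v i ≠ 0 → 0 < (μ i - x) * ‖b.repr v i‖ ^ 2 := fun i hi =>
    mul_pos (sub_pos.2 (not_not.1 (mt (b.repr_eq_zero_of_mem_span_image hv) hi))) (by positivity)
  obtain ⟨i, hi⟩ : ∃ i, b.repr v i ≠ 0 := by
    by_contra! h
    exact hv0 (b.repr.map_eq_zero_iff.1 (PiLp.ext h))
  refine sum_pos' (fun j _ => ?_) ⟨i, mem_univ i, hterm i hi⟩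
  by_cases hj : b.repr v j = 0
  · simp [hj]
  · exact (hterm j hj).le

end OrthonormalBasis

theorem Submodule.finrank_add_finrank_add_finrank_le_of_disjoint {K V : Type*} [DivisionRing K]
    [AddCommGroup V] [Module K V] [FiniteDimensional K V] {U W L : Submodule K V}
    (h : Disjoint U (W ⊓ L)) :
    Module.finrank K U + Module.finrank K W + Module.finrank K L ≤ 2 * Module.finrank K V := by
  have hU := Submodule.finrank_add_finrank_le_of_disjoint h
  have hWL := Submodule.finrank_sup_add_finrank_inf_eq W L
  have hsup := Submodule.finrank_le (W ⊔ L)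
  omega

theorem LinearMap.IsSymmetric.card_filter_le_le_add_finrank_range_sub {𝕜 E ι κ : Type*} [RCLike 𝕜]
    [NormedAddCommGroup E] [InnerProductSpace 𝕜 E] [Fintype ι] [Fintype κ] {S T : E →ₗ[𝕜] E}
    (hS : S.IsSymmetric) (hT : T.IsSymmetric) {bS : OrthonormalBasis ι 𝕜 E}
    {bT : OrthonormalBasis κ 𝕜 E} {μ : ι → ℝ} {ν : κ → ℝ}
    (hbS : ∀ i, S (bS i) = (μ i : 𝕜) • bS i) (hbT : ∀ j, T (bT j) = (ν j : 𝕜) • bT j) (x : ℝ) :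
    #{i | μ i ≤ x} ≤ #{j | ν j ≤ x} + Module.finrank 𝕜 (range (S - T)) := by
  have : FiniteDimensional 𝕜 E := bS.toBasis.finiteDimensional_of_finite
  set V := Submodule.span 𝕜 (bS '' {i | μ i ≤ x})
  set W := Submodule.span 𝕜 (bT '' {j | x < ν j})
  have hdisj : Disjoint V (W ⊓ ker (S - T)) := by
    refine Submodule.disjoint_def.2 fun v hvV ⟨hvW, hvK⟩ => by_contra fun hv0 => ?_
    have hST : S v = T v := sub_eq_zero.1 hvK
    have hle := OrthonormalBasis.re_inner_apply_self_le_of_mem_span hS hbS hvV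
    have hlt := OrthonormalBasis.lt_re_inner_apply_self_of_mem_span hT hbT hvW hv0
    rw [hST] at hle
    exact hle.not_gt hlt
  have hdim := Submodule.finrank_add_finrank_add_finrank_le_of_disjoint hdisj
  have hV : Module.finrank 𝕜 V = #{i | μ i ≤ x} := by
    have h := bS.finrank_span_image {i | μ i ≤ x}
    rwa [coe_filter_univ] at h
  have hW : Module.finrank 𝕜 W = #{j | x < ν j} := by
    have h := bT.finrank_span_image {j | x < ν j}
    rwa [coe_filter_univ] at h
  have hsplit : #{j | ν j ≤ x} + #{j | x < ν j} = Fintype.card κ := by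
    simpa [not_le] using card_filter_add_card_filter_not (s := univ) (fun j => ν j ≤ x)
  have hnullity := LinearMap.finrank_range_add_finrank_ker (S - T)
  have hι := Module.finrank_eq_card_basis bS.toBasis
  have hκ := Module.finrank_eq_card_basis bT.toBasis
  omega

theorem Matrix.rank_neg {m n R : Type*} [Fintype n] [CommRing R] (A : Matrix m n R) :
    (-A).rank = A.rank := by
  simpa using rank_smul_of_mem_nonZeroDivisors A isUnit_one.neg.mem_nonZeroDivisors

namespace Matrix.IsHermitian

variable {𝕜 m : Type*} [RCLike 𝕜] [Fintype m] [DecidableEq m] {A B : Matrix m m 𝕜}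

theorem toEuclideanLin_eigenvectorBasis (hA : A.IsHermitian) (i : m) :
    toEuclideanLin A (hA.eigenvectorBasis i) = (hA.eigenvalues i : 𝕜) • hA.eigenvectorBasis i := by
  rw [toLpLin_apply, hA.mulVec_eigenvectorBasis, RCLike.real_smul_eq_coe_smul (K := 𝕜)]
  rfl

theorem card_filter_eigenvalues_le_le_add_rank_sub (hA : A.IsHermitian) (hB : B.IsHermitian)
    (x : ℝ) : #{i | hA.eigenvalues i ≤ x} ≤ #{i | hB.eigenvalues i ≤ x} + (A - B).rank := by
  have hrank : (A - B).rank = Module.finrank 𝕜 (toEuclideanLin A - toEuclideanLin B).range := by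
    rw [← map_sub]
    exact rank_eq_finrank_range_toLin (A - B) (PiLp.basisFun 2 𝕜 m) (PiLp.basisFun 2 𝕜 m)
  rw [hrank]
  exact LinearMap.IsSymmetric.card_filter_le_le_add_finrank_range_sub
    (isSymmetric_toEuclideanLin_iff.mpr hA) (isSymmetric_toEuclideanLin_iff.mpr hB)
    hA.toEuclideanLin_eigenvectorBasis hB.toEuclideanLin_eigenvectorBasis x

end Matrix.IsHermitian

noncomputable def levyDist (F G : ℝ → ℝ) : ℝ :=
  sInf {h : ℝ | 0 ≤ h ∧ ∀ x : ℝ, F (x - h) - h ≤ G x ∧ G x ≤ F (x + h) + h}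

theorem levyDist_le_of_forall_le_add {F G : ℝ → ℝ} (hF : Monotone F) {r : ℝ} (hr : 0 ≤ r)
    (hFG : ∀ x, F x ≤ G x + r) (hGF : ∀ x, G x ≤ F x + r) : levyDist F G ≤ r := by
  refine csInf_le ⟨0, fun h hh => hh.1⟩ ⟨hr, fun x => ⟨?_, ?_⟩⟩
  · linarith [hF (by linarith : x - r ≤ x), hFG x]
  · linarith [hF (by linarith : x ≤ x + r), hGF x]

theorem stmt_1_general {n : ℕ} (A B : Matrix (Fin n) (Fin n) ℂ)
    (hA : A.IsHermitian) (hB : B.IsHermitian)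
    (FA : ℝ → ℝ) (FB : ℝ → ℝ)
    (hFA : ∀ x, FA x = (univ.filter fun i => hA.eigenvalues i ≤ x).card / n)
    (hFB : ∀ x, FB x = (univ.filter fun i => hB.eigenvalues i ≤ x).card / n) :
    sInf {h : ℝ | 0 ≤ h ∧ ∀ x : ℝ, FA (x - h) - h ≤ FB x ∧ FB x ≤ FA (x + h) + h}
      ≤ (A - B).rank / n := by
  have hmono : Monotone FA := fun y z hyz => by
    rw [hFA, hFA]
    gcongr
  refine levyDist_le_of_forall_le_add hmono (by positivity) (fun x => ?_) (fun x => ?_)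
  · rw [hFA, hFB, ← add_div]
    gcongr
    exact_mod_cast hA.card_filter_eigenvalues_le_le_add_rank_sub hB x
  · rw [hFA, hFB, ← add_div, ← rank_neg, neg_sub]
    gcongr
    exact_mod_cast hB.card_filter_eigenvalues_le_le_add_rank_sub hA x

/-- Rank difference inequality: the Lévy distance between the empirical spectral
measures of two Hermitian matrices is at most `rank (A - B) / n`. -/
theorem stmt_1 {n : ℕ} (hn : 0 < n) (A B : Matrix (Fin n) (Fin n) ℂ)
    (hA : A.IsHermitian) (hB : B.IsHermitian)
    (FA : ℝ → ℝ) (FB : ℝ → ℝ)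
    (hFA : ∀ x, FA x = (univ.filter fun i => hA.eigenvalues i ≤ x).card / n)
    (hFB : ∀ x, FB x = (univ.filter fun i => hB.eigenvalues i ≤ x).card / n) :
    sInf {h : ℝ | 0 ≤ h ∧ ∀ x : ℝ, FA (x - h) - h ≤ FB x ∧ FB x ≤ FA (x + h) + h}
      ≤ (A - B).rank / n :=
  stmt_1_general A B hA hB FA FB hFA hFB
end

section
/- The function f(x) = (k/(2π))·√(4(k−1) − x²)/(k² − x²) for |x| ≤ 2√(k−1) (and f(x)=0 otherwise) is a probability density on ℝ, for every integer k ≥ 2. -/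
/-!
For `0 < a ≤ b` and `d = √(b² - a²)`, the function
`arcsin (x / a) - (d / b) · arcsin (d x / (a √(b² - x²)))` is a primitive of
`√(a² - x²) / (b² - x²)` on `(-a, a)`. It is odd and equals `π/2 · (1 - d/b)` at `a`, so the
integral over `[-a, a]` is `π (b - d) / b`. For McKay's density `a = 2√(k-1)` and `b = k`,
hence `d = k - 2` and the total mass is `k/(2π) · 2π/k = 1`.
-/

open MeasureTheory Real Set

section

variable {a b d x : ℝ}

theorem hasDerivAt_arcsin_div (ha : 0 < a) (hx : x ∈ Ioo (-a) a) :
    HasDerivAt (fun y => arcsin (y / a)) (1 / √(a ^ 2 - x ^ 2)) x := by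
  have hax : 0 < a ^ 2 - x ^ 2 := by nlinarith [hx.1, hx.2]
  have hlo : x / a ≠ -1 := by
    rw [Ne, div_eq_iff ha.ne']; linarith [hx.1]
  have hhi : x / a ≠ 1 := by
    rw [Ne, div_eq_iff ha.ne']; linarith [hx.2]
  refine ((hasDerivAt_arcsin hlo hhi).comp x ((hasDerivAt_id x).div_const a)).congr_deriv ?_
  have hsq : 1 - (x / a) ^ 2 = (√(a ^ 2 - x ^ 2) / a) ^ 2 := by
    rw [div_pow, div_pow, sq_sqrt hax.le]
    field_simp
  rw [hsq, sqrt_sq (by positivity)]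
  field_simp

theorem hasDerivAt_mul_div_sqrt_sq_sub_sq (ha : a ≠ 0) (hbx : 0 < b ^ 2 - x ^ 2) :
    HasDerivAt (fun y => d * y / (a * √(b ^ 2 - y ^ 2)))
      (d * b ^ 2 / (a * (b ^ 2 - x ^ 2) * √(b ^ 2 - x ^ 2))) x := by
  have hsqrt : HasDerivAt (fun y => √(b ^ 2 - y ^ 2)) (-x / √(b ^ 2 - x ^ 2)) x := by
    refine ((hasDerivAt_sqrt hbx.ne').comp x
      ((hasDerivAt_pow 2 x).const_sub (b ^ 2))).congr_deriv ?_
    field_simp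
    ring
  have hnum : HasDerivAt (fun y => d * y) d x := by
    simpa using (hasDerivAt_id x).const_mul d
  have hden : a * √(b ^ 2 - x ^ 2) ≠ 0 := mul_ne_zero ha (sqrt_pos.2 hbx).ne'
  refine (hnum.div (hsqrt.const_mul a) hden).congr_deriv ?_
  field_simp
  linear_combination (-d * x ^ 2) * sq_sqrt hbx.le

theorem hasDerivAt_arcsin_mul_div_sqrt_sq_sub_sq (ha : 0 < a) (hb : 0 < b)
    (hd : d ^ 2 = b ^ 2 - a ^ 2) (hx : x ∈ Ioo (-a) a) :
    HasDerivAt (fun y => arcsin (d * y / (a * √(b ^ 2 - y ^ 2))))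
      (d * b / ((b ^ 2 - x ^ 2) * √(a ^ 2 - x ^ 2))) x := by
  have hax : 0 < a ^ 2 - x ^ 2 := by nlinarith [hx.1, hx.2]
  have hbx : 0 < b ^ 2 - x ^ 2 := by nlinarith
  have hss := sq_sqrt hbx.le
  have hst := sq_sqrt hax.le
  have hsq : 1 - (d * x / (a * √(b ^ 2 - x ^ 2))) ^ 2
      = (b * √(a ^ 2 - x ^ 2) / (a * √(b ^ 2 - x ^ 2))) ^ 2 := by
    field_simp
    linear_combination a ^ 2 * hss - x ^ 2 * hd - b ^ 2 * hst
  have hlt : (d * x / (a * √(b ^ 2 - x ^ 2))) ^ 2 < 1 := by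
    have : 0 < (b * √(a ^ 2 - x ^ 2) / (a * √(b ^ 2 - x ^ 2))) ^ 2 := by positivity
    linarith
  have hlo : d * x / (a * √(b ^ 2 - x ^ 2)) ≠ -1 := by
    intro h; rw [h] at hlt; norm_num at hlt
  have hhi : d * x / (a * √(b ^ 2 - x ^ 2)) ≠ 1 := by
    intro h; rw [h] at hlt; norm_num at hlt
  refine ((hasDerivAt_arcsin hlo hhi).comp x
    (hasDerivAt_mul_div_sqrt_sq_sub_sq ha.ne' hbx)).congr_deriv ?_
  rw [hsq, sqrt_sq (by positivity)]
  field_simp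

end

noncomputable def mckayPrimitive (a b x : ℝ) : ℝ :=
  arcsin (x / a) - √(b ^ 2 - a ^ 2) / b * arcsin (√(b ^ 2 - a ^ 2) * x / (a * √(b ^ 2 - x ^ 2)))

namespace mckayPrimitive

variable {a b x : ℝ}

theorem hasDerivAt (ha : 0 < a) (hab : a ≤ b) (hx : x ∈ Ioo (-a) a) :
    HasDerivAt (mckayPrimitive a b) (√(a ^ 2 - x ^ 2) / (b ^ 2 - x ^ 2)) x := by
  have hb : 0 < b := ha.trans_le hab
  have hd : √(b ^ 2 - a ^ 2) ^ 2 = b ^ 2 - a ^ 2 := sq_sqrt (by nlinarith)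
  have hax : 0 < a ^ 2 - x ^ 2 := by nlinarith [hx.1, hx.2]
  have hbx : 0 < b ^ 2 - x ^ 2 := by nlinarith
  refine ((hasDerivAt_arcsin_div ha hx).sub
    ((hasDerivAt_arcsin_mul_div_sqrt_sq_sub_sq ha hb hd hx).const_mul _)).congr_deriv ?_
  field_simp
  linear_combination -sq_sqrt hax.le - hd

theorem continuousOn (ha : 0 < a) (hab : a ≤ b) :
    ContinuousOn (mckayPrimitive a b) (Icc (-a) a) := by
  have hfirst : Continuous fun x => arcsin (x / a) := by fun_prop
  rcases hab.eq_or_lt with rfl | hlt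
  · have : mckayPrimitive a a = fun x => arcsin (x / a) := by ext; simp [mckayPrimitive]
    exact this ▸ hfirst.continuousOn
  refine hfirst.continuousOn.sub (continuousOn_const.mul
    (continuous_arcsin.comp_continuousOn (ContinuousOn.div (by fun_prop) (by fun_prop) ?_)))
  intro x hx
  have : 0 < b ^ 2 - x ^ 2 := by nlinarith [hx.1, hx.2]
  positivity

theorem neg : mckayPrimitive a b (-x) = -mckayPrimitive a b x := by
  simp only [mckayPrimitive, neg_div, mul_neg, neg_sq, arcsin_neg]
  ring

theorem apply_self (ha : a ≠ 0) :
    mckayPrimitive a b a = π / 2 * (1 - √(b ^ 2 - a ^ 2) / b) := by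
  rw [mckayPrimitive, div_self ha, arcsin_one, mul_comm _ a, mul_div_mul_left _ _ ha]
  rcases eq_or_ne √(b ^ 2 - a ^ 2) 0 with hd | hd
  · simp [hd]
  · rw [div_self hd, arcsin_one]
    ring

end mckayPrimitive

theorem integral_sqrt_sq_sub_sq_div_sq_sub_sq {a b : ℝ} (ha : 0 < a) (hab : a ≤ b) :
    ∫ x in (-a)..a, √(a ^ 2 - x ^ 2) / (b ^ 2 - x ^ 2) = π * (b - √(b ^ 2 - a ^ 2)) / b := by
  have hb : 0 < b := ha.trans_le hab
  have hle : -a ≤ a := by linarith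
  have hderiv : ∀ x ∈ Ioo (-a) a,
      HasDerivAt (mckayPrimitive a b) (√(a ^ 2 - x ^ 2) / (b ^ 2 - x ^ 2)) x :=
    fun x hx => mckayPrimitive.hasDerivAt ha hab hx
  have hcont := mckayPrimitive.continuousOn ha hab
  have hint : IntervalIntegrable (fun x => √(a ^ 2 - x ^ 2) / (b ^ 2 - x ^ 2)) volume (-a) a := by
    refine intervalIntegral.intervalIntegrable_deriv_of_nonneg (g := mckayPrimitive a b) ?_ ?_ ?_
      <;> simp only [uIcc_of_le hle, min_eq_left hle, max_eq_right hle]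
    · exact hcont
    · exact hderiv
    · intro x hx
      have : 0 < b ^ 2 - x ^ 2 := by nlinarith [hx.1, hx.2]
      positivity
  rw [intervalIntegral.integral_eq_sub_of_hasDerivAt_of_le hle hcont hderiv hint,
    mckayPrimitive.neg, mckayPrimitive.apply_self ha.ne']
  field_simp
  ring

/-- McKay's density `f(x) = (k/(2π))·√(4(k-1)-x²)/(k²-x²)` on
`[-2√(k-1), 2√(k-1)]` (and `0` elsewhere) is a probability density on `ℝ`. -/
theorem stmt_7 (k : ℕ) (hk : 2 ≤ k) (f : ℝ → ℝ)
    (hf : ∀ x : ℝ, f x =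
      if |x| ≤ 2 * Real.sqrt (k - 1) then
        (k / (2 * Real.pi)) * Real.sqrt (4 * ((k : ℝ) - 1) - x ^ 2) / ((k : ℝ) ^ 2 - x ^ 2)
      else 0) :
    (∀ x : ℝ, 0 ≤ f x) ∧ ∫ x : ℝ, f x = 1 := by
  have hk2 : (2 : ℝ) ≤ k := by exact_mod_cast hk
  set a := 2 * √((k : ℝ) - 1)
  have hs := sq_sqrt (by linarith : (0 : ℝ) ≤ k - 1)
  have ha : 0 < a := by have := sqrt_pos.2 (by linarith : (0 : ℝ) < k - 1); positivity
  have ha2 : a ^ 2 = 4 * ((k : ℝ) - 1) := by rw [mul_pow, hs]; ring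
  have hak : a ≤ k := by nlinarith [sq_nonneg (√((k : ℝ) - 1) - 1)]
  have hkd : √((k : ℝ) ^ 2 - a ^ 2) = k - 2 := by
    rw [ha2, show (k : ℝ) ^ 2 - 4 * (k - 1) = (k - 2) ^ 2 by ring, sqrt_sq (by linarith)]
  refine ⟨fun x => ?_, ?_⟩
  · rw [hf]
    split_ifs with hx
    · have : x ^ 2 ≤ a ^ 2 := sq_le_sq' (abs_le.1 hx).1 (abs_le.1 hx).2
      exact div_nonneg (by positivity) (by nlinarith)
    · exact le_rfl
  have hsupp : ∀ x ∉ Icc (-a) a, f x = 0 := fun x hx => by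
    rw [hf, if_neg (fun h => hx (abs_le.1 h))]
  have hon : ∀ x ∈ uIcc (-a) a, f x = k / (2 * π) * (√(a ^ 2 - x ^ 2) / (k ^ 2 - x ^ 2)) :=
    fun x hx => by
      rw [uIcc_of_le (by linarith)] at hx
      rw [hf, if_pos (abs_le.2 hx), ← ha2, mul_div_assoc]
  rw [← setIntegral_eq_integral_of_forall_compl_eq_zero hsupp, integral_Icc_eq_integral_Ioc,
    ← intervalIntegral.integral_of_le (by linarith), intervalIntegral.integral_congr hon,
    intervalIntegral.integral_const_mul, integral_sqrt_sq_sub_sq_div_sq_sub_sq ha hak, hkd]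
  field_simp
  ring
end

section
/- For all u ≥ 0 and w ∈ ℂ_+, e^{iuw} = 1 − √u ∫_0^∞ (J₁(2√(ut))/√t) e^{−it/w} dt, where J₁(t) = (t/2)∑_{k≥0} (−t²/4)^k/(k!(k+1)!) is the Bessel function of the first kind of order 1. -/
/-!
Put `z = i/w`, so that `Re z > 0` and `-u/z = iuw`. Since
`J₁(2√(ut))/√t = √u ∑ₖ (-ut)ᵏ / (k! (k+1)!)`, the integral is the Laplace transform at `z` of an
entire power series whose coefficients decay fast enough to integrate term by term. With
`∫₀^∞ tᵏ e^{-zt} dt = k!/z^{k+1}` (integration by parts) this gives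
`√u ∫ ⋯ = -∑ₖ (-u/z)^{k+1}/(k+1)! = 1 - e^{-u/z}`.
-/

open MeasureTheory Set Filter Topology Complex Nat

section Laplace

variable {z : ℂ}

lemma norm_pow_mul_cexp_neg_mul {t : ℝ} (ht : 0 ≤ t) (n : ℕ) :
    ‖(t : ℂ) ^ n * cexp (-(z * t))‖ = t ^ n * Real.exp (-z.re * t) := by
  simp [norm_exp, abs_of_nonneg ht]

lemma integrableOn_pow_mul_cexp_neg_mul (hz : 0 < z.re) (n : ℕ) :
    IntegrableOn (fun t : ℝ ↦ (t : ℂ) ^ n * cexp (-(z * t))) (Ioi 0) := by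
  have hreal : IntegrableOn (fun t : ℝ ↦ t ^ (n : ℝ) * Real.exp (-z.re * t ^ (1 : ℝ))) (Ioi 0) :=
    integrableOn_rpow_mul_exp_neg_mul_rpow (by linarith [n.cast_nonneg (α := ℝ)]) one_pos hz
  refine Integrable.mono' hreal (by fun_prop) ?_
  filter_upwards [ae_restrict_mem measurableSet_Ioi] with t ht
  rw [norm_pow_mul_cexp_neg_mul (le_of_lt ht), Real.rpow_natCast, Real.rpow_one]

lemma tendsto_pow_mul_cexp_neg_mul_atTop (hz : 0 < z.re) (n : ℕ) :
    Tendsto (fun t : ℝ ↦ (t : ℂ) ^ n * cexp (-(z * t))) atTop (𝓝 0) := by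
  rw [tendsto_zero_iff_norm_tendsto_zero]
  refine (tendsto_rpow_mul_exp_neg_mul_atTop_nhds_zero n z.re hz).congr' ?_
  filter_upwards [eventually_ge_atTop 0] with t ht
  rw [norm_pow_mul_cexp_neg_mul ht, Real.rpow_natCast]

lemma hasDerivAt_pow_mul_cexp_neg_mul (n : ℕ) (t : ℝ) :
    HasDerivAt (fun s : ℝ ↦ (s : ℂ) ^ (n + 1) * cexp (-(z * s)))
      ((n + 1) * ((t : ℂ) ^ n * cexp (-(z * t)))
        - z * ((t : ℂ) ^ (n + 1) * cexp (-(z * t)))) t := by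
  have hpow : HasDerivAt (fun s : ℝ ↦ (s : ℂ) ^ (n + 1)) ((n + 1) * (t : ℂ) ^ n) t := by
    simpa using (hasDerivAt_pow (n + 1) (t : ℂ)).comp_ofReal
  have hlin : HasDerivAt (fun s : ℝ ↦ -(z * s)) (-z) t := by
    simpa using ((ofRealCLM.hasDerivAt (x := t)).const_mul z).fun_neg
  exact (hpow.mul hlin.cexp).congr_deriv (by ring)

lemma integral_pow_mul_cexp_neg_mul (hz : 0 < z.re) (n : ℕ) :
    ∫ t in Ioi (0 : ℝ), (t : ℂ) ^ n * cexp (-(z * t)) = n ! / z ^ (n + 1) := by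
  have hz0 : z ≠ 0 := fun h ↦ by simp [h] at hz
  induction n with
  | zero =>
    simpa [← neg_mul, div_neg, neg_div] using integral_exp_mul_complex_Ioi (a := -z) (by simpa) 0
  | succ n ih =>
    have hn := (integrableOn_pow_mul_cexp_neg_mul hz n).const_mul ((n : ℂ) + 1)
    have hn1 := (integrableOn_pow_mul_cexp_neg_mul hz (n + 1)).const_mul z
    have hftc := integral_Ioi_of_hasDerivAt_of_tendsto'
      (fun t _ ↦ hasDerivAt_pow_mul_cexp_neg_mul n t) (hn.sub hn1)
      (tendsto_pow_mul_cexp_neg_mul_atTop hz (n + 1))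
    rw [integral_sub hn hn1, integral_const_mul, integral_const_mul, ih] at hftc
    simp only [ofReal_zero, zero_pow n.succ_ne_zero, zero_mul, sub_zero] at hftc
    rw [eq_div_iff (pow_ne_zero _ hz0)]
    push_cast [factorial_succ]
    field_simp at hftc
    linear_combination -hftc

lemma integral_norm_pow_mul_cexp_neg_mul (hz : 0 < z.re) (n : ℕ) :
    ∫ t in Ioi (0 : ℝ), ‖(t : ℂ) ^ n * cexp (-(z * t))‖ = n ! / z.re ^ (n + 1) := by
  have h := integral_pow_mul_cexp_neg_mul (z := z.re) (by simpa using hz) n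
  rw [← ofReal_inj, ofReal_div, ofReal_pow, ofReal_natCast, ← h, ← integral_complex_ofReal]
  refine setIntegral_congr_fun measurableSet_Ioi fun t ht ↦ ?_
  rw [norm_pow_mul_cexp_neg_mul (le_of_lt ht)]
  push_cast
  ring_nf

lemma integral_tsum_mul_pow_mul_cexp_neg_mul (hz : 0 < z.re) {a : ℕ → ℂ}
    (ha : Summable fun k ↦ ‖a k‖ * k ! / z.re ^ (k + 1)) :
    ∫ t in Ioi (0 : ℝ), (∑' k, a k * (t : ℂ) ^ k) * cexp (-(z * t))
      = ∑' k, a k * (k ! / z ^ (k + 1)) := by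
  have hint (k : ℕ) := (integrableOn_pow_mul_cexp_neg_mul hz k).const_mul (a k)
  have hnorm : Summable fun k ↦ ∫ t in Ioi (0 : ℝ), ‖a k * ((t : ℂ) ^ k * cexp (-(z * t)))‖ := by
    refine ha.congr fun k ↦ ?_
    simp_rw [norm_mul, integral_const_mul, ← norm_mul, integral_norm_pow_mul_cexp_neg_mul hz,
      mul_div_assoc]
  calc ∫ t in Ioi (0 : ℝ), (∑' k, a k * (t : ℂ) ^ k) * cexp (-(z * t))
      = ∫ t in Ioi (0 : ℝ), ∑' k, a k * ((t : ℂ) ^ k * cexp (-(z * t))) := by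
        simp_rw [← tsum_mul_right, mul_assoc]
    _ = ∑' k, ∫ t in Ioi (0 : ℝ), a k * ((t : ℂ) ^ k * cexp (-(z * t))) :=
        (integral_tsum_of_summable_integral_norm hint hnorm).symm
    _ = ∑' k, a k * (k ! / z ^ (k + 1)) := by
        simp_rw [integral_const_mul, integral_pow_mul_cexp_neg_mul hz]

end Laplace

lemma hasSum_pow_succ_div_factorial_succ (x : ℂ) :
    HasSum (fun k ↦ x ^ (k + 1) / (k + 1)!) (cexp x - 1) := by
  have h := (hasSum_nat_add_iff' 1).mpr (NormedSpace.expSeries_div_hasSum_exp x)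
  simpa [← exp_eq_exp_ℂ] using h

lemma summable_pow_div_factorial_succ (x : ℝ) : Summable fun k ↦ x ^ k / (k + 1)! := by
  refine (Real.summable_pow_div_factorial |x|).of_norm_bounded fun k ↦ ?_
  rw [norm_div, norm_pow, Real.norm_eq_abs, RCLike.norm_natCast]
  gcongr
  exact k.le_succ

lemma summable_norm_pow_div_factorial_mul_factorial_succ (u : ℝ) {c : ℝ} (hc : 0 < c) :
    Summable fun k : ℕ ↦ ‖(-(u : ℂ)) ^ k / (k ! * (k + 1)!)‖ * k ! / c ^ (k + 1) := by
  refine ((summable_pow_div_factorial_succ (|u| / c)).div_const c).congr fun k ↦ ?_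
  have : (k ! : ℝ) ≠ 0 := by exact_mod_cast k.factorial_ne_zero
  simp only [norm_div, norm_pow, norm_neg, norm_mul, Complex.norm_real, Real.norm_eq_abs,
    RCLike.norm_natCast, div_pow]
  field_simp
  ring

noncomputable def besselJ₁ (x : ℝ) : ℝ :=
  x / 2 * ∑' k : ℕ, (-(x ^ 2) / 4) ^ k / (k ! * (k + 1)!)

lemma besselJ₁_two_mul_sqrt_mul_div_sqrt {u t : ℝ} (hu : 0 ≤ u) (ht : 0 < t) :
    besselJ₁ (2 * √(u * t)) / √t = √u * ∑' k : ℕ, (-u) ^ k / (k ! * (k + 1)!) * t ^ k := by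
  have hsq : (2 * √(u * t)) ^ 2 = 4 * (u * t) := by
    rw [mul_pow, Real.sq_sqrt (mul_nonneg hu ht.le)]; ring
  have hst : √t ≠ 0 := (Real.sqrt_pos.mpr ht).ne'
  rw [besselJ₁, hsq, Real.sqrt_mul hu, mul_div_cancel_left₀ _ two_ne_zero, mul_right_comm,
    mul_div_cancel_right₀ _ hst]
  congr 1
  refine tsum_congr fun k ↦ ?_
  ring

lemma hasSum_mul_pow_div_factorial_mul_factorial_succ {z : ℂ} (hz : z ≠ 0) (u : ℂ) :
    HasSum (fun k : ℕ ↦ u * ((-u) ^ k / (k ! * (k + 1)!) * (k ! / z ^ (k + 1))))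
      (1 - cexp (-u / z)) := by
  have h := (hasSum_pow_succ_div_factorial_succ (-u / z)).neg
  rw [neg_sub] at h
  refine h.congr_fun fun k ↦ ?_
  have : (k ! : ℂ) ≠ 0 := by exact_mod_cast k.factorial_ne_zero
  rw [div_pow, pow_succ (-u)]
  field_simp

/-- For `u ≥ 0` and `w ∈ ℂ₊`,
`e^{iuw} = 1 - √u ∫₀^∞ J₁(2√(ut)) t^{-1/2} e^{-it/w} dt`, where `J₁` is the Bessel
function of the first kind of order one. -/
theorem stmt_18 (J₁ : ℝ → ℝ)
    (hJ : ∀ t : ℝ, J₁ t = (t / 2) * ∑' k : ℕ,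
      (-(t ^ 2) / 4) ^ k / ((Nat.factorial k : ℝ) * (Nat.factorial (k + 1) : ℝ)))
    (u : ℝ) (hu : 0 ≤ u) (w : ℂ) (hw : 0 < w.im) :
    Complex.exp (Complex.I * u * w)
      = 1 - (Real.sqrt u : ℂ) * ∫ t in Set.Ioi (0 : ℝ),
          ((J₁ (2 * Real.sqrt (u * t)) / Real.sqrt t : ℝ) : ℂ)
            * Complex.exp (-(Complex.I * t) * w⁻¹) := by
  obtain rfl : J₁ = besselJ₁ := funext hJ
  have hw0 : w ≠ 0 := by rintro rfl; simp at hw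
  set z := I * w⁻¹ with hz_def
  have hz : 0 < z.re := by
    simpa [hz_def, inv_im, neg_div] using div_pos hw (normSq_pos.mpr hw0)
  set a : ℕ → ℂ := fun k ↦ (-(u : ℂ)) ^ k / (k ! * (k + 1)!)
  have ha : Summable fun k ↦ ‖a k‖ * k ! / z.re ^ (k + 1) :=
    summable_norm_pow_div_factorial_mul_factorial_succ u hz
  have hintegrand : ∀ t ∈ Ioi (0 : ℝ),
      ((besselJ₁ (2 * √(u * t)) / √t : ℝ) : ℂ) * cexp (-(I * t) * w⁻¹)
        = √u * ((∑' k, a k * (t : ℂ) ^ k) * cexp (-(z * t))) := by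
    intro t ht
    rw [besselJ₁_two_mul_sqrt_mul_div_sqrt hu ht, show -(I * t) * w⁻¹ = -(z * t) by ring,
      ofReal_mul, ofReal_tsum, mul_assoc]
    congr 3 with k
    push_cast
    rfl
  rw [setIntegral_congr_fun measurableSet_Ioi hintegrand, integral_const_mul,
    integral_tsum_mul_pow_mul_cexp_neg_mul hz ha, ← mul_assoc, ← ofReal_mul,
    Real.mul_self_sqrt hu, ← tsum_mul_left,
    (hasSum_mul_pow_div_factorial_mul_factorial_succ (ne_of_apply_ne re hz.ne') (u : ℂ)).tsum_eq]
  have hexponent : -(u : ℂ) / z = I * u * w := by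
    rw [hz_def]
    field_simp
    linear_combination -(u : ℂ) * I_sq
  rw [hexponent]
  ring
end
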